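/- Completeness of typing: for every closed simply typed lambda-term M of sort o over the signature {a : o → o, b : o → o → o, e : o}, there exists a flag f ∈ {pr, np} such that ⊢ M : (f, r) is derivable in the deterministic type system. -/

import Mathlib

namespace STLC

inductive Ty : Type
  | o : Ty
  | arrow : Ty → Ty → Ty

/-- Intersection types refining sorts, with productivity flags
(`true` = `pr`, `false` = `np`):
`𝒯^o = {r}` and `𝒯^{α→β} = 𝒫({pr,np} × 𝒯^α) × 𝒯^β` (finite subsets). -/
def ITy : Ty → Type
  | .o => PUnit
  | .arrow α β => Finset (Bool × ITy α) × ITy β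

noncomputable instance ITy.deq (α : Ty) : DecidableEq (ITy α) := Classical.decEq _
noncomputable instance (α : Ty) : DecidableEq (Bool × ITy α) := Classical.decEq _

def ITy.base : ITy .o := PUnit.unit

def ITy.arr {α β : Ty} (T : Finset (Bool × ITy α)) (τ : ITy β) : ITy (.arrow α β) :=
  (T, τ)

/-- Intrinsically simply-typed lambda-terms in de Bruijn representation,
over the signature `a : o → o`, `b : o → o → o`, `e : o`. -/
inductive Tm : List Ty → Ty → Type
  | var {Γ} (i : Fin Γ.length) : Tm Γ (Γ.get i)
  | ca {Γ} : Tm Γ (.arrow .o .o)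
  | cb {Γ} : Tm Γ (.arrow .o (.arrow .o .o))
  | ce {Γ} : Tm Γ .o
  | lam {Γ γ δ} (K : Tm (γ :: Γ) δ) : Tm Γ (.arrow γ δ)
  | app {Γ γ δ} (K : Tm Γ (.arrow γ δ)) (L : Tm Γ γ) : Tm Γ δ

/-- A type environment: to each variable of the context it assigns a finite set
of (flag, type) pairs (possibly several bindings per variable). -/
def Env (Γ : List Ty) := ∀ i : Fin Γ.length, Finset (Bool × ITy (Γ.get i))

/-- The empty type environment. -/
def Env.empty {Γ : List Ty} : Env Γ := fun _ => ∅

/-- The environment with the single binding `xᵢ : (f, τ)`. -/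
noncomputable def Env.single {Γ : List Ty} (i : Fin Γ.length)
    (p : Bool × ITy (Γ.get i)) : Env Γ :=
  fun j => if h : i = j then {h ▸ p} else ∅

/-- Extending an environment with the set of bindings for a fresh variable. -/
def Env.cons {Γ : List Ty} {γ : Ty} (T : Finset (Bool × ITy γ)) (E : Env Γ) :
    Env (γ :: Γ) := fun j =>
  match j with
  | ⟨0, _⟩ => T
  | ⟨i + 1, h⟩ => E ⟨i, Nat.lt_of_succ_lt_succ h⟩

/-- `|Γ↾pr|`: the number of productive bindings in an environment. -/
noncomputable def Env.prSize {Γ : List Ty} (E : Env Γ) : ℕ :=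
  ∑ i : Fin Γ.length, ((E i).filter (fun p => p.1 = true)).card

/-- The union `Γ ∪ ⋃_{i ∈ I} Γᵢ` of the environments of an application node. -/
noncomputable def Env.appUnion {Γ : List Ty} {ι : Type} [Fintype ι]
    (E₀ : Env Γ) (Es : ι → Env Γ) : Env Γ :=
  fun i => E₀ i ∪ Finset.univ.biUnion (fun p => Es p i)

/-- Derivations in the deterministic intersection type system of Section 3.
`Der E M f τ` derives the judgment `E ⊢ M : (f, τ)`
(`f = true` means the flag `pr`, `f = false` means `np`). -/
inductive Der : ∀ {Γ : List Ty} {α : Ty}, Env Γ → Tm Γ α → Bool → ITy α → Type where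
  | ca {Γ : List Ty} (f : Bool) :
      Der (Γ := Γ) Env.empty .ca true (ITy.arr {(f, ITy.base)} ITy.base)
  | cb {Γ : List Ty} (f₁ f₂ : Bool) :
      Der (Γ := Γ) Env.empty .cb false
        (ITy.arr {(f₁, ITy.base)} (ITy.arr {(f₂, ITy.base)} ITy.base))
  | ce {Γ : List Ty} :
      Der (Γ := Γ) Env.empty .ce false ITy.base
  | var {Γ : List Ty} (i : Fin Γ.length) (f : Bool) (τ : ITy (Γ.get i)) :
      Der (Env.single i (f, τ)) (.var i) false τ
  | lam {Γ : List Ty} {γ δ : Ty} {K : Tm (γ :: Γ) δ} {E : Env Γ}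
      {T : Finset (Bool × ITy γ)} {f : Bool} {τ : ITy δ} :
      Der (Env.cons T E) K f τ →
      Der E (.lam K) f (ITy.arr T τ)
  | app {Γ : List Ty} {γ δ : Ty} {K : Tm Γ (.arrow γ δ)} {L : Tm Γ γ}
      {T : Finset (Bool × ITy γ)} {τ : ITy δ} {f' : Bool} {E₀ : Env Γ}
      (dK : Der E₀ K f' (ITy.arr T τ))
      (fo : {p // p ∈ T} → Bool) (Es : {p // p ∈ T} → Env Γ)
      (dL : ∀ p : {p // p ∈ T}, Der (Es p) L (fo p) p.1.2)
      (hb : ∀ p : {p // p ∈ T}, p.1.1 = (fo p || decide (0 < (Es p).prSize)))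
      (f : Bool)
      (hf : f = true ↔
        (f' = true ∨ (∃ p, fo p = true) ∨
          Env.prSize (Env.appUnion E₀ Es) < E₀.prSize + ∑ p : {p // p ∈ T}, (Es p).prSize)) :
      Der (Env.appUnion E₀ Es) (.app K L) f τ

/-- The value of a derivation: the sum over all nodes of the node values
(`1` at `a`-nodes, the number of duplicated productive bindings at application
nodes, `0` elsewhere). -/
noncomputable def Der.val :
    ∀ {Γ : List Ty} {α : Ty} {E : Env Γ} {M : Tm Γ α} {f : Bool} {τ : ITy α},
      Der E M f τ → ℕ
  | _, _, _, _, _, _, .ca _ => 1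
  | _, _, _, _, _, _, .cb _ _ => 0
  | _, _, _, _, _, _, .ce => 0
  | _, _, _, _, _, _, .var _ _ _ => 0
  | _, _, _, _, _, _, .lam d => d.val
  | _, _, _, _, _, _, .app (E₀ := E₀) dK fo Es dL _ _ _ =>
      (E₀.prSize + (∑ p, (Es p).prSize) - Env.prSize (Env.appUnion E₀ Es))
        + dK.val + ∑ p, (dL p).val


/-! Completeness is proved by a logical relation over a "demand semantics" of the simple types,
which plays the role of normalisation. A value of sort `o` is a flag (is the term productive?);
a value of sort `α → β` is a function on values together with, for every argument and every
demand on the result, the flag of the function itself and the typings it requires of its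
argument. A demand on `α → β` is an argument value and a demand on `β`, and a value answers a
demand with a flagged intersection type.

Every term gets a good value, and for every good demand a derivation of the answered type,
whose bindings are answers of the variables' values and whose flag, together with the
productive bindings it uses, is exactly the semantic flag. For a closed term of sort `o` the
only demand yields `⊢ M : (f, r)`. -/

lemma Env.prSize_empty {Γ : List Ty} : (Env.empty (Γ := Γ)).prSize = 0 := by
  simp [Env.prSize, Env.empty]

lemma Env.prSize_pos_iff {Γ : List Ty} (E : Env Γ) :
    0 < E.prSize ↔ ∃ i, ∃ p ∈ E i, p.1 = true := by
  simp [Env.prSize, Finset.sum_pos_iff, Finset.card_pos, Finset.filter_nonempty_iff]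

lemma Env.eq_of_mem_single {Γ : List Ty} {i j : Fin Γ.length} {q : Bool × ITy (Γ.get i)}
    {p : Bool × ITy (Γ.get j)} (hp : p ∈ Env.single i q j) : ∃ h : i = j, p = h ▸ q := by
  unfold Env.single at hp
  split_ifs at hp with h
  · exact ⟨h, Finset.mem_singleton.mp hp⟩
  · exact absurd hp (Finset.notMem_empty p)

lemma Env.prSize_single {Γ : List Ty} (i : Fin Γ.length) (p : Bool × ITy (Γ.get i)) :
    (Env.single i p).prSize = if p.1 = true then 1 else 0 := by
  rw [Env.prSize, Finset.sum_eq_single i]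
  · by_cases h : p.1 = true <;> simp [Env.single, Finset.filter_singleton, h]
  · intro j _ hj
    simp [Env.single, Ne.symm hj]
  · simp

lemma Env.prSize_appUnion_pos_iff {Γ : List Ty} {ι : Type} [Fintype ι]
    (E₀ : Env Γ) (Es : ι → Env Γ) :
    0 < (Env.appUnion E₀ Es).prSize ↔ 0 < E₀.prSize + ∑ q, (Es q).prSize := by
  simp only [Nat.add_pos_iff_pos_or_pos, Finset.sum_pos_iff, Env.prSize_pos_iff,
    Env.appUnion, Finset.mem_union, Finset.mem_biUnion, Finset.mem_univ, true_and]
  aesop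

/-- The duplication counter `|Γ↾pr| < |Γ₀↾pr| + Σ |Γᵢ↾pr|` can only fire when some premise uses
a productive binding, so adding it to the flag of an application node does not change whether
the node is productive or uses a productive binding. -/
lemma Env.productive_appUnion_iff {Γ : List Ty} {ι : Type} [Fintype ι]
    (E₀ : Env Γ) (Es : ι → Env Γ) (f₀ : Prop) (fs : ι → Prop) :
    ((f₀ ∨ 0 < E₀.prSize) ∨ ∃ q, fs q ∨ 0 < (Es q).prSize) ↔
      (f₀ ∨ (∃ q, fs q) ∨
          (Env.appUnion E₀ Es).prSize < E₀.prSize + ∑ q, (Es q).prSize) ∨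
        0 < (Env.appUnion E₀ Es).prSize := by
  have hpos := Env.prSize_appUnion_pos_iff E₀ Es
  have hsum : 0 < ∑ q, (Es q).prSize ↔ ∃ q, 0 < (Es q).prSize := by
    simp [Finset.sum_pos_iff]
  have hsplit : 0 < (Env.appUnion E₀ Es).prSize ↔ 0 < E₀.prSize ∨ ∃ q, 0 < (Es q).prSize :=
    hpos.trans (by rw [← hsum]; omega)
  have hdup : (Env.appUnion E₀ Es).prSize < E₀.prSize + ∑ q, (Es q).prSize →
      0 < (Env.appUnion E₀ Es).prSize := fun h => hpos.2 (by omega)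
  simp only [exists_or]
  tauto

def Env.head {Γ : List Ty} {γ : Ty} (E : Env (γ :: Γ)) : Finset (Bool × ITy γ) :=
  E ⟨0, Nat.succ_pos _⟩

def Env.tail {Γ : List Ty} {γ : Ty} (E : Env (γ :: Γ)) : Env Γ :=
  fun i => E i.succ

lemma Env.cons_head_tail {Γ : List Ty} {γ : Ty} (E : Env (γ :: Γ)) :
    Env.cons E.head E.tail = E := by
  funext j
  match j with
  | ⟨0, _⟩ => rfl
  | ⟨_ + 1, _⟩ => rfl

lemma Env.prSize_pos_iff_tail_or_head {Γ : List Ty} {γ : Ty} (E : Env (γ :: Γ)) :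
    0 < E.prSize ↔ 0 < E.tail.prSize ∨ ∃ p ∈ E.head, p.1 = true := by
  rw [Env.prSize_pos_iff, Env.prSize_pos_iff]
  exact Fin.exists_fin_succ.trans or_comm

mutual
def Val : Ty → Type
  | .o => Bool
  | .arrow α β => (Val α → Val β) × (Val α → Demand β → Bool × Finset (Bool × ITy α))

def Demand : Ty → Type
  | .o => PUnit
  | .arrow α β => Val α × Demand β
end

def answer : ∀ α : Ty, Val α → Demand α → Bool × ITy α
  | .o, v, _ => (v, ITy.base)
  | .arrow _ β, v, d =>
      ((v.2 d.1 d.2).1, ITy.arr (v.2 d.1 d.2).2 (answer β (v.1 d.1) d.2).2)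

def Val.default : ∀ α : Ty, Val α
  | .o => false
  | .arrow _ β => (fun _ => Val.default β, fun _ _ => (false, ∅))

mutual
def GoodVal : ∀ α : Ty, Val α → Prop
  | .o, _ => True
  | .arrow γ β, v => ∀ w, GoodVal γ w → GoodVal β (v.1 w) ∧
      ∀ d, GoodDemand β d →
        (∀ p ∈ (v.2 w d).2, ∃ d', GoodDemand γ d' ∧ p = answer γ w d') ∧
        ((answer β (v.1 w) d).1 = true ↔
          (v.2 w d).1 = true ∨ ∃ p ∈ (v.2 w d).2, p.1 = true)

def GoodDemand : ∀ α : Ty, Demand α → Prop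
  | .o, _ => True
  | .arrow γ β, d => GoodVal γ d.1 ∧ GoodDemand β d.2
end

def ValEnv (Γ : List Ty) : Type := ∀ i : Fin Γ.length, Val (Γ.get i)

def ValEnv.cons {Γ : List Ty} {γ : Ty} (w : Val γ) (ρ : ValEnv Γ) : ValEnv (γ :: Γ) :=
  fun j => match j with
  | ⟨0, _⟩ => w
  | ⟨i + 1, h⟩ => ρ ⟨i, Nat.lt_of_succ_lt_succ h⟩

lemma ValEnv.good_cons {Γ : List Ty} {γ : Ty} {w : Val γ} {ρ : ValEnv Γ} (hw : GoodVal γ w)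
    (hρ : ∀ i, GoodVal _ (ρ i)) : ∀ j, GoodVal _ (ρ.cons w j)
  | ⟨0, _⟩ => hw
  | ⟨i + 1, h⟩ => hρ ⟨i, Nat.lt_of_succ_lt_succ h⟩

structure Realizer {Γ : List Ty} (ρ : ValEnv Γ) {α : Ty} (v : Val α) (M : Tm Γ α)
    (d : Demand α) : Type where
  flag : Bool
  env : Env Γ
  answer_flag : (answer α v d).1 = true ↔ flag = true ∨ 0 < env.prSize
  env_answers : ∀ i, ∀ p ∈ env i, ∃ d', GoodDemand _ d' ∧ p = answer _ (ρ i) d'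
  der : Der env M flag (answer α v d).2

def Realizes {Γ : List Ty} (ρ : ValEnv Γ) {α : Ty} (v : Val α) (M : Tm Γ α) : Type :=
  ∀ d : Demand α, GoodDemand α d → Realizer ρ v M d

def LogRel {Γ : List Ty} (ρ : ValEnv Γ) : ∀ α : Ty, Val α → Tm Γ α → Type
  | .o, v, M => Realizes ρ v M
  | .arrow γ δ, v, M =>
      Realizes ρ v M ×
        ∀ (w : Val γ) (L : Tm Γ γ), GoodVal γ w → LogRel ρ γ w L →
          LogRel ρ δ (v.1 w) (.app M L)

def LogRel.realizes {Γ : List Ty} {ρ : ValEnv Γ} :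
    ∀ {α : Ty} {v : Val α} {M : Tm Γ α}, LogRel ρ α v M → Realizes ρ v M
  | .o, _, _, r => r
  | .arrow _ _, _, _, r => r.1

lemma Realizer.answer_flag_eq {Γ : List Ty} {ρ : ValEnv Γ} {α : Ty} {v : Val α}
    {M : Tm Γ α} {d : Demand α} (r : Realizer ρ v M d) :
    (answer α v d).1 = (r.flag || decide (0 < r.env.prSize)) :=
  Bool.eq_iff_iff.mpr (by simpa using r.answer_flag)

noncomputable def Realizes.app {Γ : List Ty} {ρ : ValEnv Γ} {γ β : Ty}
    {v : Val (.arrow γ β)} {M : Tm Γ (.arrow γ β)} (hv : GoodVal _ v) (hM : Realizes ρ v M)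
    {w : Val γ} {L : Tm Γ γ} (hw : GoodVal γ w) (hL : Realizes ρ w L) :
    Realizes ρ (v.1 w) (.app M L) := fun d hd =>
  let rM := hM (w, d) ⟨hw, hd⟩
  let T := (v.2 w d).2
  have hT := ((hv w hw).2 d hd).1
  let dem : {p // p ∈ T} → Demand γ := fun p => Classical.choose (hT p.1 p.2)
  have hdem : ∀ p, GoodDemand γ (dem p) ∧ p.1 = answer γ w (dem p) :=
    fun p => Classical.choose_spec (hT p.1 p.2)
  let rL : ∀ p, Realizer ρ w L (dem p) := fun p => hL (dem p) (hdem p).1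
  let E := Env.appUnion rM.env fun p => (rL p).env
  { flag := decide (rM.flag = true ∨ (∃ p, (rL p).flag = true) ∨
      E.prSize < rM.env.prSize + ∑ p, (rL p).env.prSize)
    env := E
    answer_flag := by
      have hreq : (∃ p ∈ T, p.1 = true) ↔
          ∃ p : {p // p ∈ T}, (rL p).flag = true ∨ 0 < (rL p).env.prSize := by
        refine ⟨fun ⟨p, hp, h⟩ => ⟨⟨p, hp⟩, ?_⟩, fun ⟨p, h⟩ => ⟨p.1, p.2, ?_⟩⟩
        · rw [← (rL _).answer_flag, ← (hdem ⟨p, hp⟩).2]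
          exact h
        · rwa [(hdem p).2, (rL p).answer_flag]
      rw [((hv w hw).2 d hd).2, hreq, decide_eq_true_iff]
      exact (rM.answer_flag.or Iff.rfl).trans
        (Env.productive_appUnion_iff _ _ _ fun p => (rL p).flag = true)
    env_answers := fun i p hp => by
      simp only [E, Env.appUnion, Finset.mem_union, Finset.mem_biUnion] at hp
      rcases hp with hp | ⟨q, -, hq⟩
      exacts [rM.env_answers i p hp, (rL q).env_answers i p hq]
    der := Der.app rM.der (fun p => (rL p).flag) (fun p => (rL p).env)
      (fun p => congrArg Prod.snd (hdem p).2 ▸ (rL p).der)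
      (fun p => by rw [(hdem p).2]; exact (rL p).answer_flag_eq) _ decide_eq_true_iff }

noncomputable def LogRel.ofRealizes {Γ : List Ty} {ρ : ValEnv Γ} :
    ∀ {α : Ty} {v : Val α} {M : Tm Γ α}, GoodVal α v → Realizes ρ v M → LogRel ρ α v M
  | .o, _, _, _, h => h
  | .arrow _ _, _, _, hv, h =>
      (h, fun _ _ hw hL => LogRel.ofRealizes (hv _ hw).1 (h.app hv hw hL.realizes))

structure Interp {Γ : List Ty} (ρ : ValEnv Γ) {α : Ty} (M : Tm Γ α) : Type where
  val : Val α
  good : GoodVal α val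
  rel : LogRel ρ α val M

noncomputable def Interp.var {Γ : List Ty} (ρ : ValEnv Γ) (hρ : ∀ i, GoodVal _ (ρ i))
    (i : Fin Γ.length) : Interp ρ (.var i) where
  val := ρ i
  good := hρ i
  rel := .ofRealizes (hρ i) fun d hd =>
    { flag := false
      env := Env.single i (answer _ (ρ i) d)
      answer_flag := by
        rw [Env.prSize_single]
        cases (answer _ (ρ i) d).1 <;> simp
      env_answers := fun j p hp => by
        obtain ⟨rfl, rfl⟩ := Env.eq_of_mem_single hp
        exact ⟨d, hd, rfl⟩
      der := Der.var i _ _ }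

noncomputable def Interp.const {Γ : List Ty} {ρ : ValEnv Γ} {α : Ty} {M : Tm Γ α} (v : Val α)
    (hv : GoodVal α v) (f : Bool) (hflag : ∀ d, (answer α v d).1 = f)
    (der : ∀ d, Der Env.empty M f (answer α v d).2) : Interp ρ M where
  val := v
  good := hv
  rel := .ofRealizes hv fun d _ =>
    { flag := f
      env := Env.empty
      answer_flag := by simp [hflag, Env.prSize_empty]
      env_answers := fun _ p hp => absurd hp (Finset.notMem_empty p)
      der := der d }

-- The binders are typed `Bool` rather than `Val .o` so that `simp` sees Boolean terms.
def aVal : Val (.arrow .o .o) :=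
  (fun _ => true, fun (w : Bool) _ => (true, {(w, ITy.base)}))

lemma aVal_good : GoodVal _ aVal := fun _ _ =>
  ⟨trivial, fun _ _ =>
    ⟨fun _ hp => ⟨PUnit.unit, trivial, Finset.mem_singleton.mp hp⟩, by simp [aVal, answer]⟩⟩

def bVal : Val (.arrow .o (.arrow .o .o)) :=
  (fun (w₁ : Bool) =>
      (fun (w₂ : Bool) => w₁ || w₂, fun (w₂ : Bool) _ => (w₁, {(w₂, ITy.base)})),
    fun (w₁ : Bool) _ => (false, {(w₁, ITy.base)}))

lemma bVal_good : GoodVal _ bVal := fun (w₁ : Bool) _ =>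
  ⟨fun (w₂ : Bool) _ =>
    ⟨trivial, fun _ _ =>
      ⟨fun _ hp => ⟨PUnit.unit, trivial, Finset.mem_singleton.mp hp⟩,
        by simp [bVal, answer]⟩⟩,
    fun _ _ =>
      ⟨fun _ hp => ⟨PUnit.unit, trivial, Finset.mem_singleton.mp hp⟩,
        by simp [bVal, answer]⟩⟩

section Lam

variable {Γ : List Ty} {ρ : ValEnv Γ} {γ δ : Ty} {K : Tm (γ :: Γ) δ}

/-- What `λ K` requires of an argument: the bindings of the bound variable, and a flag telling
whether the body is productive apart from them. -/
noncomputable def Realizer.lamRequirement {w : Val γ} {v : Val δ} {d : Demand δ}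
    (r : Realizer (ρ.cons w) v K d) : Bool × Finset (Bool × ITy γ) :=
  (decide (r.flag = true ∨ 0 < r.env.tail.prSize), r.env.head)

open Classical in
/-- Off good arguments and demands the value is irrelevant. -/
noncomputable def lamVal (F : ∀ w : Val γ, GoodVal γ w → Interp (ρ.cons w) K) :
    Val (.arrow γ δ) :=
  (fun w => if h : GoodVal γ w then (F w h).val else Val.default δ,
    fun w d => if h : GoodVal γ w ∧ GoodDemand δ d
      then ((F w h.1).rel.realizes d h.2).lamRequirement else (false, ∅))

variable (F : ∀ w : Val γ, GoodVal γ w → Interp (ρ.cons w) K)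

lemma lamVal_fst {w : Val γ} (hw : GoodVal γ w) : (lamVal F).1 w = (F w hw).val :=
  dif_pos hw

lemma lamVal_snd {w : Val γ} {d : Demand δ} (hw : GoodVal γ w) (hd : GoodDemand δ d) :
    (lamVal F).2 w d = ((F w hw).rel.realizes d hd).lamRequirement :=
  dif_pos ⟨hw, hd⟩

lemma lamVal_good : GoodVal _ (lamVal F) := by
  intro w hw
  rw [lamVal_fst F hw]
  refine ⟨(F w hw).good, fun d hd => ?_⟩
  rw [lamVal_snd F hw hd]
  set r := (F w hw).rel.realizes d hd
  refine ⟨fun p hp => r.env_answers ⟨0, Nat.succ_pos _⟩ p hp, ?_⟩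
  rw [r.answer_flag, Env.prSize_pos_iff_tail_or_head]
  simp only [Realizer.lamRequirement, decide_eq_true_iff]
  exact or_assoc.symm

noncomputable def realizesLam : Realizes ρ (lamVal F) (.lam K) := fun d hd =>
  let r := (F d.1 hd.1).rel.realizes d.2 hd.2
  { flag := r.flag
    env := r.env.tail
    answer_flag := by
      show ((lamVal F).2 d.1 d.2).1 = true ↔ _
      rw [lamVal_snd F hd.1 hd.2]
      simp [Realizer.lamRequirement, r]
    env_answers := fun i => r.env_answers i.succ
    der := by
      show Der _ _ _ (ITy.arr ((lamVal F).2 d.1 d.2).2 (answer δ ((lamVal F).1 d.1) d.2).2)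
      rw [lamVal_fst F hd.1, lamVal_snd F hd.1 hd.2]
      exact Der.lam (r.env.cons_head_tail ▸ r.der) }

noncomputable def Interp.lam : Interp ρ (.lam K) :=
  ⟨lamVal F, lamVal_good F, .ofRealizes (lamVal_good F) (realizesLam F)⟩

end Lam

noncomputable def Interp.app {Γ : List Ty} {ρ : ValEnv Γ} {γ δ : Ty} {K : Tm Γ (.arrow γ δ)}
    {L : Tm Γ γ} (iK : Interp ρ K) (iL : Interp ρ L) : Interp ρ (.app K L) :=
  ⟨iK.val.1 iL.val, (iK.good iL.val iL.good).1, iK.rel.2 iL.val L iL.good iL.rel⟩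

noncomputable def interp : ∀ {Γ : List Ty} {α : Ty} (M : Tm Γ α) (ρ : ValEnv Γ),
    (∀ i, GoodVal _ (ρ i)) → Interp ρ M
  | _, _, .var i, ρ, hρ => .var ρ hρ i
  | _, _, .ce, _, _ => .const false trivial false (fun _ => rfl) fun _ => .ce
  | _, _, .ca, _, _ => .const aVal aVal_good true (fun _ => rfl) fun d => .ca d.1
  | _, _, .cb, _, _ => .const bVal bVal_good false (fun _ => rfl) fun d => .cb d.1 d.2.1
  | _, _, .lam K, ρ, hρ => .lam fun w hw => interp K (ρ.cons w) (ρ.good_cons hw hρ)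
  | _, _, .app K L, ρ, hρ => .app (interp K ρ hρ) (interp L ρ hρ)

/-- Completeness of typing (Condition (D2)): every closed lambda-term of
sort `o` has a derivable type `⊢ M : (f, r)` for some flag `f ∈ {pr, np}`. -/
theorem typing_completeness (M : Tm [] .o) :
    ∃ f : Bool, Nonempty (Der Env.empty M f ITy.base) := by
  let r := (interp M (fun i => i.elim0) fun i => i.elim0).rel.realizes PUnit.unit trivial
  have hempty : r.env = Env.empty := funext fun i => i.elim0
  exact ⟨r.flag, ⟨hempty ▸ r.der⟩⟩

end STLC
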